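/- arXiv:2409.13986 — 10 statements merged into one kernel-verified Lean document; each statement's English description precedes it below -/
import Mathlib

section
/- Let q, k, p, p* be real numbers with 1 < q < k < p < p*. Let c ∈ ℝ, β ≥ 0, A ≥ 0, let (a_n) and (b_n) be sequences of nonnegative real numbers, and let (ε_n) be a sequence of reals with ε_n → 0. Assume that for every n, (1/p − 1/p*)·a_n^p + (1/q − 1/p*)·b_n^q ≤ c + β·(a_n + b_n) + A·a_n^k + ε_n. Then the sequence (a_n + b_n) is bounded. -/
/-!
Writing `α = 1/p - 1/p*` and `γ = 1/q - 1/p*`, both positive, the hypothesis says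
`f (a n) + g (b n) ≤ c + sup ε` with `f x = α x^p - β x - A x^k` and `g y = γ y^q - β y`.
Since `k < p` and `1 < q`, both `f` and `g` are continuous and tend to `+∞`, so each is bounded
below on `[0, ∞)`. Hence `f (a n)` and `g (b n)` are bounded above, which bounds `a n` and `b n`.
-/

open Filter Set

theorem tendsto_mul_rpow_sub_mul_sub_mul_rpow_atTop {α p k : ℝ} (β A : ℝ) (hα : 0 < α)
    (hp : 1 < p) (hkp : k < p) :
    Tendsto (fun x : ℝ => α * x ^ p - β * x - A * x ^ k) atTop atTop := by
  have h_one : Tendsto (fun x : ℝ => x ^ (1 - p)) atTop (nhds 0) := by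
    simpa only [neg_sub] using tendsto_rpow_neg_atTop (y := p - 1) (by linarith)
  have h_k : Tendsto (fun x : ℝ => x ^ (k - p)) atTop (nhds 0) := by
    simpa only [neg_sub] using tendsto_rpow_neg_atTop (y := p - k) (by linarith)
  have h_factor :
      Tendsto (fun x : ℝ => α - β * x ^ (1 - p) - A * x ^ (k - p)) atTop (nhds α) := by
    simpa using ((h_one.const_mul β).const_sub α).sub (h_k.const_mul A)
  refine ((tendsto_rpow_atTop (y := p) (by linarith)).atTop_mul_pos hα h_factor).congr' ?_
  filter_upwards [eventually_gt_atTop 0] with x hx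
  have h_one_eq : x ^ p * x ^ (1 - p) = x := by rw [← Real.rpow_add hx]; simp
  have h_k_eq : x ^ p * x ^ (k - p) = x ^ k := by rw [← Real.rpow_add hx]; ring_nf
  linear_combination (-β) * h_one_eq - A * h_k_eq

theorem bddAbove_preimage_Iic_of_tendsto_atTop {f : ℝ → ℝ} (hf : Tendsto f atTop atTop)
    (C : ℝ) : BddAbove (f ⁻¹' Iic C) := by
  obtain ⟨T, hT⟩ := eventually_atTop.mp (hf.eventually_gt_atTop C)
  exact ⟨T, fun x hx => le_of_not_ge fun hTx => (hT x hTx).not_ge hx⟩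

theorem bddBelow_image_Ici_of_tendsto_atTop {f : ℝ → ℝ} (hf : Continuous f)
    (h_top : Tendsto f atTop atTop) (a : ℝ) : BddBelow (f '' Ici a) := by
  obtain ⟨T, hT⟩ := eventually_atTop.mp (h_top.eventually_ge_atTop 0)
  obtain ⟨m, hm⟩ := (isCompact_Icc (a := a) (b := T)).bddBelow_image hf.continuousOn
  refine ⟨min m 0, ?_⟩
  rintro _ ⟨x, hx, rfl⟩
  rcases le_total x T with hxT | hTx
  · exact (min_le_left _ _).trans (hm ⟨x, ⟨hx, hxT⟩, rfl⟩)
  · exact (min_le_right _ _).trans (hT x hTx)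

theorem stmt_0_general (q k p ps : ℝ) (hq : 1 < q) (hqk : q < k) (hkp : k < p) (hpps : p < ps)
    (c β A : ℝ)
    (a b : ℕ → ℝ) (ha : ∀ n, 0 ≤ a n) (hb : ∀ n, 0 ≤ b n)
    (ε : ℕ → ℝ) (hε : Filter.Tendsto ε Filter.atTop (nhds 0))
    (h : ∀ n, (1 / p - 1 / ps) * a n ^ p + (1 / q - 1 / ps) * b n ^ q
        ≤ c + β * (a n + b n) + A * a n ^ k + ε n) :
    ∃ M : ℝ, ∀ n, a n + b n ≤ M := by
  set f : ℝ → ℝ := fun x => (1 / p - 1 / ps) * x ^ p - β * x - A * x ^ k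
  set g : ℝ → ℝ := fun y => (1 / q - 1 / ps) * y ^ q - β * y
  have hf_top : Tendsto f atTop atTop := tendsto_mul_rpow_sub_mul_sub_mul_rpow_atTop β A
    (sub_pos.2 <| one_div_lt_one_div_of_lt (by linarith) hpps) (by linarith) hkp
  have hg_top : Tendsto g atTop atTop := by
    simpa only [zero_mul, sub_zero] using
      tendsto_mul_rpow_sub_mul_sub_mul_rpow_atTop (k := 0) β 0
        (sub_pos.2 <| one_div_lt_one_div_of_lt (by linarith) (hqk.trans (hkp.trans hpps))) hq
        (by linarith)
  have hf_cont : Continuous f := by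
    have := Real.continuous_rpow_const (q := p) (by linarith)
    have := Real.continuous_rpow_const (q := k) (by linarith)
    fun_prop
  have hg_cont : Continuous g := by
    have := Real.continuous_rpow_const (q := q) (by linarith)
    fun_prop
  obtain ⟨E, hE⟩ := hε.bddAbove_range
  obtain ⟨mf, hmf⟩ := bddBelow_image_Ici_of_tendsto_atTop hf_cont hf_top 0
  obtain ⟨mg, hmg⟩ := bddBelow_image_Ici_of_tendsto_atTop hg_cont hg_top 0
  have h_sum (n : ℕ) : f (a n) + g (b n) ≤ c + E := by
    have := h n
    have := hE ⟨n, rfl⟩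
    simp only [f, g]
    linarith
  obtain ⟨Ma, hMa⟩ := bddAbove_preimage_Iic_of_tendsto_atTop hf_top (c + E - mg)
  obtain ⟨Mb, hMb⟩ := bddAbove_preimage_Iic_of_tendsto_atTop hg_top (c + E - mf)
  refine ⟨Ma + Mb, fun n => add_le_add (hMa ?_) (hMb ?_)⟩
  · show f (a n) ≤ _
    linarith [h_sum n, hmg ⟨b n, hb n, rfl⟩]
  · show g (b n) ≤ _
    linarith [h_sum n, hmf ⟨a n, ha n, rfl⟩]

/-- Boundedness step in the Palais–Smale analysis (Lemma 2.1). -/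
theorem stmt_0 (q k p ps : ℝ) (hq : 1 < q) (hqk : q < k) (hkp : k < p) (hpps : p < ps)
    (c β A : ℝ) (hβ : 0 ≤ β) (hA : 0 ≤ A)
    (a b : ℕ → ℝ) (ha : ∀ n, 0 ≤ a n) (hb : ∀ n, 0 ≤ b n)
    (ε : ℕ → ℝ) (hε : Filter.Tendsto ε Filter.atTop (nhds 0))
    (h : ∀ n, (1 / p - 1 / ps) * a n ^ p + (1 / q - 1 / ps) * b n ^ q
        ≤ c + β * (a n + b n) + A * a n ^ k + ε n) :
    ∃ M : ℝ, ∀ n, a n + b n ≤ M :=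
  stmt_0_general q k p ps hq hqk hkp hpps c β A a b ha hb ε hε h
end

section
/- Let k, p, p* be real numbers with 1 < k < p < p*, and let S, θ, λ, Pr be positive reals. Let ℓ > 0 satisfy ℓ^(p*−p) ≥ S/θ. Then for every t ≥ 0: θ·(1/p − 1/p*)·t − λ·(1/k − 1/p)·Pr·t^(k/p*) + (1/p − 1/p*)·θ·ℓ^(p*) ≥ c̄, where c̄ := (1/p − 1/p*)·[ S^(p*/(p*−p))·θ^(−p/(p*−p)) − λ^(p*/(p*−k))·θ^(−k/(p*−k))·Pr^(p*/(p*−k))·((p*−k)/k)·((p−k)/(p*−p))^(p*/(p*−k)) ]. -/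
/-!
The `t`-dependent part `θ (1/p - 1/p*) t - λ (1/k - 1/p) Pr t^(k/p*)` is bounded below by its
minimum over `t ≥ 0`, which weighted AM–GM (Young's inequality with exponents `p*/k` and
`p*/(p*-k)`) computes to be the negative term of `c̄`. The hypothesis `ℓ^(p*-p) ≥ S/θ`, raised
to the power `p*/(p*-p)`, shows that the `ℓ` term dominates the positive term of `c̄`.
-/

open Real

lemma mul_rpow_le_young {α M t : ℝ} (hα₀ : 0 < α) (hα₁ : α < 1) (hM : 0 ≤ M) (ht : 0 ≤ t) :
    M * t ^ α ≤ α * t + (1 - α) * M ^ (1 / (1 - α)) := by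
  have hα' : 0 < 1 - α := sub_pos.2 hα₁
  have hM' : (M ^ (1 / (1 - α))) ^ (1 - α) = M := by
    rw [← rpow_mul hM, one_div_mul_cancel hα'.ne', rpow_one]
  have := geom_mean_le_arith_mean2_weighted (p₂ := M ^ (1 / (1 - α))) hα₀.le hα'.le ht
    (by positivity) (add_sub_cancel α 1)
  rwa [hM', mul_comm] at this

lemma rpow_mul_rpow_le_of_div_le_rpow {S θ ℓ p q : ℝ} (hS : 0 ≤ S) (hθ : 0 < θ) (hℓ : 0 ≤ ℓ)
    (hq : 0 ≤ q) (hpq : p < q) (h : S / θ ≤ ℓ ^ (q - p)) :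
    S ^ (q / (q - p)) * θ ^ (-p / (q - p)) ≤ θ * ℓ ^ q := by
  have hqp : 0 < q - p := sub_pos.2 hpq
  have hθe : θ ^ (-p / (q - p)) = θ / θ ^ (q / (q - p)) := by
    rw [show -p / (q - p) = 1 - q / (q - p) by field_simp; ring, rpow_sub hθ, rpow_one]
  calc S ^ (q / (q - p)) * θ ^ (-p / (q - p)) = θ * (S / θ) ^ (q / (q - p)) := by
        rw [hθe, div_rpow hS hθ.le]; ring
    _ ≤ θ * (ℓ ^ (q - p)) ^ (q / (q - p)) := by gcongr
    _ = θ * ℓ ^ q := by rw [← rpow_mul hℓ, mul_div_cancel₀ q hqp.ne']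

lemma mul_rpow_le_linear_add_const {k p ps lam θ Pr t : ℝ} (hk : 0 < k) (hkp : k < p)
    (hpps : p < ps) (hθ : 0 < θ) (hlam : 0 < lam) (hPr : 0 < Pr) (ht : 0 ≤ t) :
    lam * (1 / k - 1 / p) * Pr * t ^ (k / ps) ≤ θ * (1 / p - 1 / ps) * t +
      (1 / p - 1 / ps) * (lam ^ (ps / (ps - k)) * θ ^ (-k / (ps - k)) * Pr ^ (ps / (ps - k)) *
        ((ps - k) / k) * ((p - k) / (ps - p)) ^ (ps / (ps - k))) := by
  have hp : 0 < p := hk.trans hkp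
  have hps : 0 < ps := hp.trans hpps
  have hpsk : 0 < ps - k := by linarith
  have hpsp : 0 < ps - p := by linarith
  set e := ps / (ps - k) with he
  -- `mul_rpow_le_young` for `M`, rescaled by `θ (p* - p) / (p k)`, is the claim.
  set M := lam * Pr * ((p - k) / (ps - p)) / θ with hM
  have hθe : θ ^ (-k / (ps - k)) = θ / θ ^ e := by
    rw [show -k / (ps - k) = 1 - e by rw [he]; field_simp; ring, rpow_sub hθ, rpow_one]
  have hMe : M ^ e = lam ^ e * Pr ^ e * ((p - k) / (ps - p)) ^ e / θ ^ e := by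
    rw [div_rpow (by positivity) hθ.le, mul_rpow (by positivity) (by positivity),
      mul_rpow hlam.le hPr.le]
  have hyoung := mul_rpow_le_young (M := M) (t := t) (by positivity : 0 < k / ps)
    ((div_lt_one hps).2 (hkp.trans hpps)) (by positivity) ht
  rw [show 1 / (1 - k / ps) = e by rw [he]; field_simp] at hyoung
  calc lam * (1 / k - 1 / p) * Pr * t ^ (k / ps)
      = θ * (ps - p) / (p * k) * (M * t ^ (k / ps)) := by rw [hM]; field_simp
    _ ≤ θ * (ps - p) / (p * k) * (k / ps * t + (1 - k / ps) * M ^ e) := by gcongr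
    _ = _ := by rw [hMe, hθe]; field_simp

/-- Core algebraic inequality proving the Palais–Smale condition below the level c̄
(Lemma 2.1, display (2.2)). -/
theorem stmt_2 (k p ps : ℝ) (hk : 1 < k) (hkp : k < p) (hpps : p < ps)
    (S θ lam Pr : ℝ) (hS : 0 < S) (hθ : 0 < θ) (hlam : 0 < lam) (hPr : 0 < Pr)
    (ℓ : ℝ) (hℓ : 0 < ℓ) (hℓS : S / θ ≤ ℓ ^ (ps - p)) :
    ∀ t : ℝ, 0 ≤ t →
      (1 / p - 1 / ps) *
        (S ^ (ps / (ps - p)) * θ ^ (-p / (ps - p)) -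
          lam ^ (ps / (ps - k)) * θ ^ (-k / (ps - k)) * Pr ^ (ps / (ps - k)) *
            ((ps - k) / k) * ((p - k) / (ps - p)) ^ (ps / (ps - k)))
      ≤ θ * (1 / p - 1 / ps) * t - lam * (1 / k - 1 / p) * Pr * t ^ (k / ps)
          + (1 / p - 1 / ps) * θ * ℓ ^ ps := by
  intro t ht
  have hp : 0 < p := by linarith
  have hA : 0 < 1 / p - 1 / ps := sub_pos.2 (one_div_lt_one_div_of_lt hp hpps)
  have hℓ_term := mul_le_mul_of_nonneg_left
    (rpow_mul_rpow_le_of_div_le_rpow hS.le hθ hℓ.le (by linarith) hpps hℓS) hA.le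
  have ht_term := mul_rpow_le_linear_add_const (by linarith) hkp hpps hθ hlam hPr ht
  linarith
end

section
/- Let k, p, p* be real numbers with 1 < k < p < p*, and let S, Pr, θ, λ > 0. Set b₁ = S^(−k/p)·Pr/k, b₂ = θ·S^(−p*/p)/p*, and t* = ((p−k)/(b₂·p·(p*−k)))^(1/(p*−p)). Then −λ·b₁ + (t*)^(p−k)/p − b₂·(t*)^(p*−k) > 0 if and only if λ < λ*, where λ* := θ^(−(p−k)/(p*−p)) · ((p*−p)·k)/((p*−k)·p) · (((p−k)·p*)/((p*−k)·p))^((p−k)/(p*−p)) · S^((p*−k)/(p*−p)) / Pr. -/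
/-!
At its critical point `t*` the reduced fibering function satisfies `b₂ t*^(p*-k) = t*^(p-k) · b₂ t*^(p*-p)`
with `b₂ t*^(p*-p) = (p-k)/(p (p*-k))`, so `ĝ(t*) = -λ b₁ + (p*-p)/(p (p*-k)) · t*^(p-k)`.
Hence `ĝ(t*) > 0` iff `λ < (p*-p)/(p (p*-k)) · t*^(p-k) / b₁`, and expanding `t*^(p-k)` in terms of
`S` and `θ` turns the right-hand side into `λ*`.
-/

open Real

lemma rpow_one_div_sub_rpow {a : ℝ} (ha : 0 ≤ a) (m n : ℝ) :
    (a ^ (1 / (n - m))) ^ m = a ^ (m / (n - m)) := by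
  rw [← rpow_mul ha, one_div_mul_eq_div]

lemma rpow_one_div_sub_rpow_eq_mul {a : ℝ} (ha : 0 < a) {m n : ℝ} (hmn : m ≠ n) :
    (a ^ (1 / (n - m))) ^ n = a * (a ^ (1 / (n - m))) ^ m := by
  have hnm : n - m ≠ 0 := sub_ne_zero.mpr hmn.symm
  have hexp : 1 / (n - m) * n = 1 + 1 / (n - m) * m := by field_simp; ring
  rw [← rpow_mul ha.le, ← rpow_mul ha.le, hexp, rpow_add ha, rpow_one]

lemma reducedFibering_at_critical {p k ps b : ℝ} (hp : 0 < p) (hkp : k < p) (hpps : p < ps)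
    (hb : 0 < b) :
    let tstar := ((p - k) / (b * p * (ps - k))) ^ (1 / (ps - p))
    tstar ^ (p - k) / p - b * tstar ^ (ps - k) =
      (ps - p) / (p * (ps - k)) * ((p - k) / (b * p * (ps - k))) ^ ((p - k) / (ps - p)) := by
  intro tstar
  have hA : 0 < (p - k) / (b * p * (ps - k)) := by
    have : 0 < ps - k := by linarith
    have : 0 < p - k := by linarith
    positivity
  have hmn : p - k ≠ ps - k := by linarith
  have hgap : ps - k - (p - k) = ps - p := by ring
  have hcrit : tstar ^ (ps - k) = (p - k) / (b * p * (ps - k)) * tstar ^ (p - k) := by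
    simpa only [hgap] using rpow_one_div_sub_rpow_eq_mul hA hmn
  have hpow : tstar ^ (p - k) = ((p - k) / (b * p * (ps - k))) ^ ((p - k) / (ps - p)) := by
    simpa only [hgap] using rpow_one_div_sub_rpow hA.le (p - k) (ps - k)
  have : ps - k ≠ 0 := by linarith
  rw [hcrit, hpow]
  field_simp
  ring

lemma critical_base_eq {k p ps S θ : ℝ} (hp : 0 < p) (hps : 0 < ps) (hkps : k < ps)
    (hS : 0 < S) (hθ : 0 < θ) :
    (p - k) / (θ * S ^ (-ps / p) / ps * p * (ps - k)) =
      (p - k) * ps / ((ps - k) * p) * S ^ (ps / p) / θ := by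
  have : ps - k ≠ 0 := by linarith
  rw [neg_div, rpow_neg hS.le]
  have : 0 < S ^ (ps / p) := rpow_pos_of_pos hS _
  field_simp

lemma threshold_eq {k p ps S Pr θ : ℝ} (hk : 0 < k) (hkp : k < p) (hpps : p < ps)
    (hS : 0 < S) (hPr : 0 < Pr) (hθ : 0 < θ) :
    (ps - p) / (p * (ps - k)) *
        ((p - k) * ps / ((ps - k) * p) * S ^ (ps / p) / θ) ^ ((p - k) / (ps - p)) /
        (S ^ (-k / p) * Pr / k) =
      θ ^ (-(p - k) / (ps - p)) * ((ps - p) * k) / ((ps - k) * p) *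
        ((p - k) * ps / ((ps - k) * p)) ^ ((p - k) / (ps - p)) *
        S ^ ((ps - k) / (ps - p)) / Pr := by
  set e := (p - k) / (ps - p) with he
  set B := (p - k) * ps / ((ps - k) * p)
  have hp : 0 < p := by linarith
  have hB : 0 < B := by
    have : 0 < ps := by linarith
    have : 0 < ps - k := by linarith
    have : 0 < p - k := by linarith
    positivity
  have hSexp : (ps - k) / (ps - p) = ps / p * e + k / p := by
    have : ps - p ≠ 0 := by linarith
    rw [he]; field_simp; ring
  rw [div_rpow (mul_pos hB (rpow_pos_of_pos hS _)).le hθ.le, mul_rpow hB.le (by positivity),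
    ← rpow_mul hS.le, hSexp, rpow_add hS, neg_div, rpow_neg hS.le, show -(p - k) / (ps - p) = -e by ring,
    rpow_neg hθ.le]
  have : 0 < S ^ (k / p) := rpow_pos_of_pos hS _
  have : 0 < θ ^ e := rpow_pos_of_pos hθ _
  have : ps - k ≠ 0 := by linarith
  field_simp

theorem stmt_4_general (k p ps : ℝ) (hk : 1 < k) (hkp : k < p) (hpps : p < ps)
    (S Pr θ lam : ℝ) (hS : 0 < S) (hPr : 0 < Pr) (hθ : 0 < θ)
    (b₁ b₂ tstar : ℝ)
    (hb₁ : b₁ = S ^ (-k / p) * Pr / k) (hb₂ : b₂ = θ * S ^ (-ps / p) / ps)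
    (htstar : tstar = ((p - k) / (b₂ * p * (ps - k))) ^ (1 / (ps - p))) :
    0 < -lam * b₁ + tstar ^ (p - k) / p - b₂ * tstar ^ (ps - k) ↔
      lam < θ ^ (-(p - k) / (ps - p)) * ((ps - p) * k) / ((ps - k) * p) *
        ((p - k) * ps / ((ps - k) * p)) ^ ((p - k) / (ps - p)) *
        S ^ ((ps - k) / (ps - p)) / Pr := by
  have hk₀ : 0 < k := by linarith
  have hp : 0 < p := by linarith
  have hps : 0 < ps := by linarith
  have hb₁pos : 0 < b₁ := by rw [hb₁]; positivity
  have hb₂pos : 0 < b₂ := by rw [hb₂]; positivity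
  rw [add_sub_assoc, htstar, reducedFibering_at_critical hp hkp hpps hb₂pos,
    ← threshold_eq hk₀ hkp hpps hS hPr hθ, ← critical_base_eq hp hps (by linarith) hS hθ,
    ← hb₂, ← hb₁, lt_div_iff₀ hb₁pos]
  constructor <;> intro h <;> linarith

/-- Computation of the threshold λ* (display (3.5)). -/
theorem stmt_4 (k p ps : ℝ) (hk : 1 < k) (hkp : k < p) (hpps : p < ps)
    (S Pr θ lam : ℝ) (hS : 0 < S) (hPr : 0 < Pr) (hθ : 0 < θ) (hlam : 0 < lam)
    (b₁ b₂ tstar : ℝ)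
    (hb₁ : b₁ = S ^ (-k / p) * Pr / k) (hb₂ : b₂ = θ * S ^ (-ps / p) / ps)
    (htstar : tstar = ((p - k) / (b₂ * p * (ps - k))) ^ (1 / (ps - p))) :
    0 < -lam * b₁ + tstar ^ (p - k) / p - b₂ * tstar ^ (ps - k) ↔
      lam < θ ^ (-(p - k) / (ps - p)) * ((ps - p) * k) / ((ps - k) * p) *
        ((p - k) * ps / ((ps - k) * p)) ^ ((p - k) / (ps - p)) *
        S ^ ((ps - k) / (ps - p)) / Pr :=
  stmt_4_general k p ps hk hkp hpps S Pr θ lam hS hPr hθ b₁ b₂ tstar hb₁ hb₂ htstar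
end

section
/- Let k, p, p* be real numbers with 1 < k < p < p*, and let λ, b₁, b₂ > 0. Define ĝ(t) = −λ·b₁ + t^(p−k)/p − b₂·t^(p*−k) and g(t) = t^p/p − λ·b₁·t^k − b₂·t^(p*), and set t* = ((p−k)/(b₂·p·(p*−k)))^(1/(p*−p)). Assume ĝ(t*) > 0. Then there exist t₀, t₁ with 0 < t₀ < t* < t₁ such that ĝ(t₀) = ĝ(t₁) = 0, g(t) > 0 for all t ∈ (t₀, t₁), and g(t) ≤ 0 for all t ∈ [0, t₀] ∪ [t₁, ∞). -/
/-- Root-and-sign analysis of the fibering function g (displays (3.4) and (3.6)). -/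
theorem stmt_5 (k p ps : ℝ) (hk : 1 < k) (hkp : k < p) (hpps : p < ps)
    (lam b₁ b₂ : ℝ) (hlam : 0 < lam) (hb₁ : 0 < b₁) (hb₂ : 0 < b₂)
    (ghat g : ℝ → ℝ)
    (hghat : ∀ t, ghat t = -lam * b₁ + t ^ (p - k) / p - b₂ * t ^ (ps - k))
    (hg : ∀ t, g t = t ^ p / p - lam * b₁ * t ^ k - b₂ * t ^ ps)
    (tstar : ℝ) (htstar : tstar = ((p - k) / (b₂ * p * (ps - k))) ^ (1 / (ps - p)))
    (hpos : 0 < ghat tstar) :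
    ∃ t₀ t₁ : ℝ, 0 < t₀ ∧ t₀ < tstar ∧ tstar < t₁ ∧
      ghat t₀ = 0 ∧ ghat t₁ = 0 ∧
      (∀ t, t₀ < t → t < t₁ → 0 < g t) ∧
      (∀ t, (0 ≤ t ∧ t ≤ t₀) ∨ t₁ ≤ t → g t ≤ 0) := by
  have hp0 : (0:ℝ) < p := by linarith
  have hpk : 0 < p - k := by linarith
  have hpsp : 0 < ps - p := by linarith
  have hpsk : 0 < ps - k := by linarith
  have hfun : ghat = fun t => -lam * b₁ + t ^ (p - k) / p - b₂ * t ^ (ps - k) := funext hghat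
  set A : ℝ := (p - k) / (b₂ * p * (ps - k)) with hAdef
  have hA0 : 0 < A := by positivity
  have htstar0 : 0 < tstar := by rw [htstar]; positivity
  have htstarpow : tstar ^ (ps - p) = A := by
    rw [htstar, ← Real.rpow_mul hA0.le, one_div, inv_mul_cancel₀ hpsp.ne', Real.rpow_one]
  -- derivative of ghat
  have hderiv : ∀ t : ℝ, 0 < t → HasDerivAt ghat
      ((p - k) * t ^ (p - k - 1) / p - b₂ * ((ps - k) * t ^ (ps - k - 1))) t := by
    intro t ht
    have h1 : HasDerivAt (fun x : ℝ => x ^ (p - k)) ((p - k) * t ^ (p - k - 1)) t :=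
      Real.hasDerivAt_rpow_const (Or.inl ht.ne')
    have h2 : HasDerivAt (fun x : ℝ => x ^ (ps - k)) ((ps - k) * t ^ (ps - k - 1)) t :=
      Real.hasDerivAt_rpow_const (Or.inl ht.ne')
    rw [hfun]
    exact ((h1.div_const p).const_add (-lam * b₁)).sub (h2.const_mul b₂)
  -- factorisation of the derivative
  have hDfact : ∀ t : ℝ, 0 < t →
      (p - k) * t ^ (p - k - 1) / p - b₂ * ((ps - k) * t ^ (ps - k - 1))
        = t ^ (p - k - 1) * ((p - k) / p - b₂ * (ps - k) * t ^ (ps - p)) := by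
    intro t ht
    have h : t ^ (ps - k - 1) = t ^ (p - k - 1) * t ^ (ps - p) := by
      rw [← Real.rpow_add ht]; congr 1; ring
    rw [h]; ring
  have hbA : b₂ * (ps - k) * A = (p - k) / p := by
    rw [hAdef]; field_simp
  -- continuity on [0, tstar]
  have hrc : ∀ c : ℝ, 0 < c → ContinuousOn (fun t : ℝ => t ^ c) (Set.Icc 0 tstar) :=
    fun c hc t _ => (Real.continuousAt_rpow_const t c (Or.inr hc.le)).continuousWithinAt
  have hcont : ContinuousOn ghat (Set.Icc 0 tstar) := by
    rw [hfun]
    exact (continuousOn_const.add ((hrc _ hpk).div_const p)).sub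
      (continuousOn_const.mul (hrc _ hpsk))
  -- strict monotonicity on [0, tstar]
  have hmono : StrictMonoOn ghat (Set.Icc 0 tstar) := by
    apply strictMonoOn_of_deriv_pos (convex_Icc 0 tstar) hcont
    intro t ht
    rw [interior_Icc] at ht
    rw [(hderiv t ht.1).deriv, hDfact t ht.1]
    apply mul_pos (Real.rpow_pos_of_pos ht.1 _)
    have hlt : t ^ (ps - p) < A := by
      rw [← htstarpow]
      exact Real.rpow_lt_rpow ht.1.le ht.2 hpsp
    nlinarith [mul_pos hb₂ hpsk]
  -- strict antitonicity on [tstar, ∞)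
  have hanti : StrictAntiOn ghat (Set.Ici tstar) := by
    apply strictAntiOn_of_deriv_neg (convex_Ici tstar)
    · exact fun t ht => (hderiv t (lt_of_lt_of_le htstar0 ht)).continuousAt.continuousWithinAt
    · intro t ht
      rw [interior_Ici] at ht
      have ht0 : 0 < t := htstar0.trans ht
      rw [(hderiv t ht0).deriv, hDfact t ht0]
      have hgt : A < t ^ (ps - p) := by
        rw [← htstarpow]
        exact Real.rpow_lt_rpow htstar0.le ht hpsp
      apply mul_neg_of_pos_of_neg (Real.rpow_pos_of_pos ht0 _)
      nlinarith [hbA, mul_pos hb₂ hpsk]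
  -- ghat 0 < 0
  have hg0 : ghat 0 < 0 := by
    rw [hghat, Real.zero_rpow hpk.ne', Real.zero_rpow hpsk.ne']
    simp
    positivity
  -- find t₀
  obtain ⟨t₀, ht₀mem, ht₀⟩ : ∃ t₀ ∈ Set.Ioo (0:ℝ) tstar, ghat t₀ = 0 := by
    have := intermediate_value_Ioo htstar0.le hcont (Set.mem_Ioo.mpr ⟨hg0, hpos⟩)
    obtain ⟨t₀, hmem, heq⟩ := this
    exact ⟨t₀, hmem, heq⟩
  -- a large T with ghat T < 0
  set B : ℝ := (1 / (p * b₂)) ^ (1 / (ps - p)) with hBdef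
  have hB0 : 0 < B := by rw [hBdef]; positivity
  set T : ℝ := max tstar B + 1 with hTdef
  have hTstar : tstar < T := lt_of_le_of_lt (le_max_left _ _) (lt_add_one _)
  have hT0 : 0 < T := htstar0.trans hTstar
  have hTB : B < T := lt_of_le_of_lt (le_max_right _ _) (lt_add_one _)
  have hTpow : 1 / (p * b₂) < T ^ (ps - p) := by
    have : B ^ (ps - p) < T ^ (ps - p) := Real.rpow_lt_rpow hB0.le hTB hpsp
    rwa [hBdef, ← Real.rpow_mul (by positivity), one_div (ps - p),
      inv_mul_cancel₀ hpsp.ne', Real.rpow_one] at this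
  have hgT : ghat T < 0 := by
    rw [hghat]
    have h : T ^ (ps - k) = T ^ (p - k) * T ^ (ps - p) := by
      rw [← Real.rpow_add hT0]; congr 1; ring
    rw [h]
    have hTpk : 0 < T ^ (p - k) := Real.rpow_pos_of_pos hT0 _
    have h2 : 1 / p < b₂ * T ^ (ps - p) := by
      have h3 := mul_lt_mul_of_pos_left hTpow hb₂
      have e : b₂ * (1 / (p * b₂)) = 1 / p := by field_simp
      linarith
    have h4 := mul_lt_mul_of_pos_left h2 hTpk
    rw [mul_one_div] at h4
    nlinarith [mul_pos hlam hb₁]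
  -- find t₁
  have hcontT : ContinuousOn ghat (Set.Icc tstar T) := fun t ht =>
    (hderiv t (lt_of_lt_of_le htstar0 ht.1)).continuousAt.continuousWithinAt
  obtain ⟨t₁, ht₁mem, ht₁⟩ : ∃ t₁ ∈ Set.Ioo tstar T, ghat t₁ = 0 := by
    have := intermediate_value_Ioo' hTstar.le hcontT (Set.mem_Ioo.mpr ⟨hgT, hpos⟩)
    obtain ⟨t₁, hmem, heq⟩ := this
    exact ⟨t₁, hmem, heq⟩
  -- factor g t = t^k * ghat t
  have hgfact : ∀ t : ℝ, 0 < t → g t = t ^ k * ghat t := by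
    intro t ht
    rw [hg, hghat]
    have e1 : t ^ p = t ^ k * t ^ (p - k) := by
      rw [← Real.rpow_add ht]; congr 1; ring
    have e2 : t ^ ps = t ^ k * t ^ (ps - k) := by
      rw [← Real.rpow_add ht]; congr 1; ring
    rw [e1, e2]; ring
  have hgzero : g 0 = 0 := by
    rw [hg, Real.zero_rpow hp0.ne', Real.zero_rpow (by linarith : k ≠ (0:ℝ)),
      Real.zero_rpow (by linarith : ps ≠ (0:ℝ))]
    ring
  refine ⟨t₀, t₁, ht₀mem.1, ht₀mem.2, ht₁mem.1, ht₀, ht₁, ?_, ?_⟩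
  · -- positivity on (t₀, t₁)
    intro t hta htb
    have ht0 : 0 < t := ht₀mem.1.trans hta
    rw [hgfact t ht0]
    apply mul_pos (Real.rpow_pos_of_pos ht0 _)
    rcases le_total t tstar with hle | hle
    · have := hmono (Set.mem_Icc.mpr ⟨ht₀mem.1.le, ht₀mem.2.le⟩)
        (Set.mem_Icc.mpr ⟨ht0.le, hle⟩) hta
      linarith [ht₀]
    · have := hanti (Set.mem_Ici.mpr hle) (Set.mem_Ici.mpr (Set.mem_Ioo.mp ht₁mem).1.le) htb
      linarith [ht₁]
  · -- nonpositivity outside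
    intro t ht
    rcases ht with ⟨h0, h1⟩ | h2
    · rcases eq_or_lt_of_le h0 with h | h
      · rw [← h, hgzero]
      · rw [hgfact t h]
        have hle : ghat t ≤ 0 := by
          rcases eq_or_lt_of_le h1 with he | hl
          · rw [he, ht₀]
          · have := hmono (Set.mem_Icc.mpr ⟨h.le, (hl.trans ht₀mem.2).le⟩)
              (Set.mem_Icc.mpr ⟨ht₀mem.1.le, ht₀mem.2.le⟩) hl
            linarith [ht₀]
        exact mul_nonpos_of_nonneg_of_nonpos (Real.rpow_pos_of_pos h _).le hle
    · have ht0 : 0 < t := htstar0.trans (ht₁mem.1.trans_le h2)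
      rw [hgfact t ht0]
      have hle : ghat t ≤ 0 := by
        rcases eq_or_lt_of_le h2 with he | hl
        · rw [← he, ht₁]
        · have := hanti (Set.mem_Ici.mpr ht₁mem.1.le)
            (Set.mem_Ici.mpr (ht₁mem.1.le.trans h2)) hl
          linarith [ht₁]
      exact mul_nonpos_of_nonneg_of_nonpos (Real.rpow_pos_of_pos ht0 _).le hle
end

section
/- Let k, p, p* be real numbers with 1 < k < p < p*. Then ((p−k)/p)^((p*−k)/p*) · (k/p*)^(k/p*) · (((p−k)·p*)/((p*−k)·p))^((p−k)/(p*−p) + k/p*) < 1. -/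
/-- Dimensionless inequality from Lemma 3.1(ii). -/
theorem stmt_6 (k p ps : ℝ) (hk : 1 < k) (hkp : k < p) (hpps : p < ps) :
    ((p - k) / p) ^ ((ps - k) / ps) * (k / ps) ^ (k / ps) *
      ((p - k) * ps / ((ps - k) * p)) ^ ((p - k) / (ps - p) + k / ps) < 1 := by
  have hk0 : (0:ℝ) < k := by linarith
  have hp0 : (0:ℝ) < p := by linarith
  have hps0 : (0:ℝ) < ps := by linarith
  have h1 : (p - k) / p ^ ((ps - k) / ps) = (p - k) / p ^ ((ps - k) / ps) := rfl
  -- factor 1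
  have hb1 : (0:ℝ) < (p - k) / p := by apply div_pos <;> linarith
  have hb1' : (p - k) / p < 1 := by
    rw [div_lt_one hp0]; linarith
  have he1 : (0:ℝ) < (ps - k) / ps := by
    apply div_pos <;> linarith
  have f1 : ((p - k) / p) ^ ((ps - k) / ps) < 1 :=
    Real.rpow_lt_one hb1.le hb1' he1
  have f1' : (0:ℝ) < ((p - k) / p) ^ ((ps - k) / ps) := Real.rpow_pos_of_pos hb1 _
  -- factor 2
  have hb2 : (0:ℝ) < k / ps := div_pos hk0 hps0
  have hb2' : k / ps < 1 := by rw [div_lt_one hps0]; linarith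
  have he2 : (0:ℝ) < k / ps := hb2
  have f2 : (k / ps) ^ (k / ps) < 1 := Real.rpow_lt_one hb2.le hb2' he2
  have f2' : (0:ℝ) < (k / ps) ^ (k / ps) := Real.rpow_pos_of_pos hb2 _
  -- factor 3
  have hden : (0:ℝ) < (ps - k) * p := by nlinarith
  have hb3 : (0:ℝ) < (p - k) * ps / ((ps - k) * p) := by
    apply div_pos _ hden; nlinarith
  have hb3' : (p - k) * ps / ((ps - k) * p) < 1 := by
    rw [div_lt_one hden]; nlinarith
  have he3 : (0:ℝ) < (p - k) / (ps - p) + k / ps := by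
    have : (0:ℝ) < (p - k) / (ps - p) := by apply div_pos <;> linarith
    linarith
  have f3 : ((p - k) * ps / ((ps - k) * p)) ^ ((p - k) / (ps - p) + k / ps) < 1 :=
    Real.rpow_lt_one hb3.le hb3' he3
  have f3' : (0:ℝ) < ((p - k) * ps / ((ps - k) * p)) ^ ((p - k) / (ps - p) + k / ps) :=
    Real.rpow_pos_of_pos hb3 _
  nlinarith [mul_pos f1' f2']
end

section
/- Let k, p, p* be real numbers with 1 < k < p < p*, and let S, Pr, θ > 0. Define λ* := θ^(−(p−k)/(p*−p)) · ((p*−p)·k)/((p*−k)·p) · (((p−k)·p*)/((p*−k)·p))^((p−k)/(p*−p)) · S^((p*−k)/(p*−p)) / Pr, and λ** := ((p*−p)/(p−k)) · (k/(p*−k))^((p*−k)/p*) · S^((p*−k)/(p*−p)) / (Pr · θ^((p−k)/(p*−p))). Then λ* < λ**. -/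
/-!
Cancelling the common factor `S ^ ((p* - k)/(p* - p)) / (Pr θ ^ ((p - k)/(p* - p)))`, the claim
becomes `A B < C y ^ t` with `A = (p* - p) k / ((p* - k) p)`, `C = (p* - p)/(p - k)`,
`y = k/(p* - k)`, `t = (p* - k)/p*` and `B = ((p - k) p* / ((p* - k) p)) ^ ((p - k)/(p* - p))`.
Here `B < 1` because its base is below one, and `A < C y ^ t` because
`A = C y ^ t · y ^ (k/p*) (p - k)/p`, where `y ^ (k/p*) ≤ max 1 y < p/(p - k)`.
-/

namespace Real

theorem rpow_lt_of_lt_of_one_lt {y c s : ℝ} (hy : 0 ≤ y) (hs₀ : 0 ≤ s) (hs₁ : s ≤ 1)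
    (hyc : y < c) (hc : 1 < c) : y ^ s < c := by
  rcases le_or_gt y 1 with hy₁ | hy₁
  · exact (rpow_le_one hy hy₁ hs₀).trans_lt hc
  · calc y ^ s ≤ y ^ (1 : ℝ) := rpow_le_rpow_of_exponent_le hy₁.le hs₁
      _ = y := rpow_one y
      _ < c := hyc

end Real

open Real

theorem sub_mul_div_lt_div_sub_mul_rpow {k p ps : ℝ} (hk : 0 < k) (hkp : k < p) (hpps : p < ps) :
    (ps - p) * k / ((ps - k) * p) < (ps - p) / (p - k) * (k / (ps - k)) ^ ((ps - k) / ps) := by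
  have hpk : 0 < p - k := by linarith
  have hpsk : 0 < ps - k := by linarith
  have hps : 0 < ps := by linarith
  set y := k / (ps - k) with hy_def
  have hy : 0 < y := div_pos hk hpsk
  have hy_lt : y < p / (p - k) :=
    calc y < k / (p - k) := div_lt_div_of_pos_left hk hpk (by linarith)
      _ < p / (p - k) := div_lt_div_of_pos_right hkp hpk
  have hroot : y ^ (k / ps) * ((p - k) / p) < 1 := by
    have h := rpow_lt_of_lt_of_one_lt hy.le (div_pos hk hps).le
      ((div_le_one hps).2 (by linarith)) hy_lt ((one_lt_div hpk).2 (by linarith))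
    rw [lt_div_iff₀ hpk] at h
    rw [mul_div_assoc', div_lt_one (by linarith)]
    exact h
  have hsplit : y ^ ((ps - k) / ps) * y ^ (k / ps) = y := by
    rw [← rpow_add hy, show (ps - k) / ps + k / ps = 1 by field_simp; ring, rpow_one]
  calc (ps - p) * k / ((ps - k) * p)
      = (ps - p) / (p - k) * (y ^ ((ps - k) / ps) * y ^ (k / ps)) * ((p - k) / p) := by
        rw [hsplit, hy_def]
        field_simp
    _ = (ps - p) / (p - k) * y ^ ((ps - k) / ps) * (y ^ (k / ps) * ((p - k) / p)) := by ring
    _ < (ps - p) / (p - k) * y ^ ((ps - k) / ps) :=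
        mul_lt_of_lt_one_right (by positivity) hroot

/-- The truncation threshold λ* is smaller than the Palais–Smale threshold λ**
(proof of Lemma 3.1(ii)). -/
theorem stmt_7 (k p ps : ℝ) (hk : 1 < k) (hkp : k < p) (hpps : p < ps)
    (S Pr θ : ℝ) (hS : 0 < S) (hPr : 0 < Pr) (hθ : 0 < θ) :
    θ ^ (-(p - k) / (ps - p)) * ((ps - p) * k) / ((ps - k) * p) *
        ((p - k) * ps / ((ps - k) * p)) ^ ((p - k) / (ps - p)) *
        S ^ ((ps - k) / (ps - p)) / Pr
      < (ps - p) / (p - k) * (k / (ps - k)) ^ ((ps - k) / ps) *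
          (S ^ ((ps - k) / (ps - p)) / (Pr * θ ^ ((p - k) / (ps - p)))) := by
  have hk₀ : 0 < k := by linarith
  have hp₀ : 0 < p := by linarith
  have hps₀ : 0 < ps := by linarith
  have hpk : 0 < p - k := by linarith
  have hpsp : 0 < ps - p := by linarith
  have hpsk : 0 < ps - k := by linarith
  have hB : ((p - k) * ps / ((ps - k) * p)) ^ ((p - k) / (ps - p)) < 1 := by
    refine rpow_lt_one (by positivity) ?_ (by positivity)
    rw [div_lt_one (by positivity)]
    nlinarith
  have hA : 0 < (ps - p) * k / ((ps - k) * p) := by positivity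
  have hF : 0 < S ^ ((ps - k) / (ps - p)) / (Pr * θ ^ ((p - k) / (ps - p))) := by positivity
  set F := S ^ ((ps - k) / (ps - p)) / (Pr * θ ^ ((p - k) / (ps - p)))
  rw [neg_div, rpow_neg hθ.le]
  calc _ = (ps - p) * k / ((ps - k) * p) *
          ((p - k) * ps / ((ps - k) * p)) ^ ((p - k) / (ps - p)) * F := by
        simp only [F]
        field_simp
    _ < (ps - p) * k / ((ps - k) * p) * F := by gcongr; exact mul_lt_of_lt_one_right hA hB
    _ < _ := by gcongr; exact sub_mul_div_lt_div_sub_mul_rpow hk₀ hkp hpps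
end

section
/- Let q, k, p be real numbers with 1 < q < k < p, and let d₁, d₂, d₃, λ > 0. Define f(t) = d₁ + d₂·t^(p−q) − λ·d₃·t^(k−q) for t ≥ 0 and C₀ := ((p−q)/(k−q))^((k−q)/(p−q)) · ((p−q)/(p−k))^((p−k)/(p−q)). Then there exists t > 0 with f(t) < 0 if and only if λ > C₀ · d₂^((k−q)/(p−q)) · d₁^((p−k)/(p−q)) / d₃. -/
/-!
Write `b = k - q`, `c = p - k`, so `p - q = b + c`. For `t > 0`,
`f t = t ^ b * (d₁ * t ^ (-b) + d₂ * t ^ c - λ * d₃)`, so `f` is negative somewhere iff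
`λ * d₃` exceeds the infimum of `g t = d₁ * t ^ (-b) + d₂ * t ^ c` over `t > 0`.
Splitting `g t` as the weighted arithmetic mean of `(b + c) / c * d₁ * t ^ (-b)` and
`(b + c) / b * d₂ * t ^ c` with weights `c / (b + c)` and `b / (b + c)`, the powers of `t` cancel in
the weighted geometric mean, which is `C₀ * d₂ ^ (b / (b + c)) * d₁ ^ (c / (b + c))`. By AM-GM this
is a lower bound for `g`, attained where the two terms agree, i.e. at `t ^ (b + c) = d₁ * b / (d₂ * c)`.
-/

open Real Set

theorem mul_rpow_neg_rpow_mul_mul_rpow_rpow {t : ℝ} (ht : 0 < t) {u v : ℝ} (hu : 0 ≤ u)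
    (hv : 0 ≤ v) (a b c : ℝ) :
    (u * t ^ (-b)) ^ (c / a) * (v * t ^ c) ^ (b / a) = u ^ (c / a) * v ^ (b / a) := by
  have hcancel : (t ^ (-b)) ^ (c / a) * (t ^ c) ^ (b / a) = 1 := by
    rw [← rpow_mul ht.le, ← rpow_mul ht.le, ← rpow_add ht,
      show -b * (c / a) + c * (b / a) = 0 by ring, rpow_zero]
  rw [mul_rpow hu (by positivity), mul_rpow hv (by positivity)]
  linear_combination u ^ (c / a) * v ^ (b / a) * hcancel

theorem isLeast_image_mul_rpow_neg_add_mul_rpow {b c d₁ d₂ : ℝ} (hb : 0 < b) (hc : 0 < c)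
    (hd₁ : 0 < d₁) (hd₂ : 0 < d₂) :
    IsLeast ((fun t ↦ d₁ * t ^ (-b) + d₂ * t ^ c) '' Ioi 0)
      (((b + c) / b) ^ (b / (b + c)) * ((b + c) / c) ^ (c / (b + c)) *
        d₂ ^ (b / (b + c)) * d₁ ^ (c / (b + c))) := by
  have hbc : 0 < b + c := by positivity
  set x : ℝ → ℝ := fun t ↦ (b + c) / c * d₁ * t ^ (-b)
  set y : ℝ → ℝ := fun t ↦ (b + c) / b * d₂ * t ^ c
  have hw : c / (b + c) + b / (b + c) = 1 := by field_simp; ring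
  have hx : ∀ t, 0 < t → 0 ≤ x t := fun t ht ↦ by positivity
  have hy : ∀ t, 0 < t → 0 ≤ y t := fun t ht ↦ by positivity
  have arith : ∀ t, c / (b + c) * x t + b / (b + c) * y t = d₁ * t ^ (-b) + d₂ * t ^ c :=
    fun t ↦ by simp only [x, y]; field_simp
  have geom : ∀ t, 0 < t → x t ^ (c / (b + c)) * y t ^ (b / (b + c)) =
      ((b + c) / b) ^ (b / (b + c)) * ((b + c) / c) ^ (c / (b + c)) *
        d₂ ^ (b / (b + c)) * d₁ ^ (c / (b + c)) := fun t ht ↦ by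
    rw [mul_rpow_neg_rpow_mul_mul_rpow_rpow ht (by positivity) (by positivity),
      mul_rpow (by positivity) hd₁.le, mul_rpow (by positivity) hd₂.le]
    ring
  refine ⟨?_, ?_⟩
  · set t₀ := (d₁ * b / (d₂ * c)) ^ (b + c)⁻¹
    have ht₀ : 0 < t₀ := by positivity
    have hxy : x t₀ = y t₀ := by
      have hpow : t₀ ^ b * t₀ ^ c * (d₂ * c) = d₁ * b := by
        rw [← rpow_add ht₀, rpow_inv_rpow (by positivity) hbc.ne',
          div_mul_cancel₀ _ (by positivity)]
      simp only [x, y]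
      rw [rpow_neg ht₀.le]
      field_simp
      linear_combination -hpow
    refine ⟨t₀, ht₀, ?_⟩
    dsimp only
    rw [← geom t₀ ht₀, ← arith, (geom_mean_eq_arith_mean2_weighted_iff_of_pos (by positivity)
      (by positivity) (hx t₀ ht₀) (hy t₀ ht₀) hw).mpr hxy]
  · rintro _ ⟨t, ht, rfl⟩
    dsimp only
    rw [← geom t ht, ← arith]
    exact geom_mean_le_arith_mean2_weighted (by positivity) (by positivity) (hx t ht) (hy t ht) hw

theorem add_mul_rpow_add_sub_mul_rpow_neg_iff {t : ℝ} (ht : 0 < t) (d₁ d₂ e b c : ℝ) :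
    d₁ + d₂ * t ^ (b + c) - e * t ^ b < 0 ↔ d₁ * t ^ (-b) + d₂ * t ^ c < e := by
  have hfactor : d₁ + d₂ * t ^ (b + c) - e * t ^ b =
      t ^ b * (d₁ * t ^ (-b) + d₂ * t ^ c - e) := by
    rw [rpow_add ht, rpow_neg ht.le]
    field_simp
  rw [hfactor, ← not_le, mul_nonneg_iff_of_pos_left (rpow_pos_of_pos ht b), not_le, sub_neg]

theorem stmt_12_general (q k p : ℝ) (hqk : q < k) (hkp : k < p)
    (d₁ d₂ d₃ lam : ℝ) (hd₁ : 0 < d₁) (hd₂ : 0 < d₂) (hd₃ : 0 < d₃)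
    (f : ℝ → ℝ) (hf : ∀ t, f t = d₁ + d₂ * t ^ (p - q) - lam * d₃ * t ^ (k - q))
    (C₀ : ℝ)
    (hC₀ : C₀ = ((p - q) / (k - q)) ^ ((k - q) / (p - q)) *
        ((p - q) / (p - k)) ^ ((p - k) / (p - q))) :
    (∃ t : ℝ, 0 < t ∧ f t < 0) ↔
      C₀ * d₂ ^ ((k - q) / (p - q)) * d₁ ^ ((p - k) / (p - q)) / d₃ < lam := by
  have hsum : k - q + (p - k) = p - q := by ring
  have hmin := isLeast_image_mul_rpow_neg_add_mul_rpow (sub_pos.2 hqk) (sub_pos.2 hkp) hd₁ hd₂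
  rw [hsum, ← hC₀] at hmin
  rw [div_lt_iff₀ hd₃, isGLB_lt_iff hmin.isGLB, exists_mem_image]
  refine exists_congr fun t ↦ and_congr_right fun ht ↦ ?_
  rw [hf, ← hsum, add_mul_rpow_add_sub_mul_rpow_neg_iff ht]

/-- Negativity of the fibering function f_λ at some t > 0 is equivalent to λ > λ̄
(displays (4.1)–(4.2), proof of Lemma 4.1). -/
theorem stmt_12 (q k p : ℝ) (hq : 1 < q) (hqk : q < k) (hkp : k < p)
    (d₁ d₂ d₃ lam : ℝ) (hd₁ : 0 < d₁) (hd₂ : 0 < d₂) (hd₃ : 0 < d₃) (hlam : 0 < lam)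
    (f : ℝ → ℝ) (hf : ∀ t, f t = d₁ + d₂ * t ^ (p - q) - lam * d₃ * t ^ (k - q))
    (C₀ : ℝ)
    (hC₀ : C₀ = ((p - q) / (k - q)) ^ ((k - q) / (p - q)) *
        ((p - q) / (p - k)) ^ ((p - k) / (p - q))) :
    (∃ t : ℝ, 0 < t ∧ f t < 0) ↔
      C₀ * d₂ ^ ((k - q) / (p - q)) * d₁ ^ ((p - k) / (p - q)) / d₃ < lam :=
  stmt_12_general q k p hqk hkp d₁ d₂ d₃ lam hd₁ hd₂ hd₃ f hf C₀ hC₀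
end

section
/- Let q, k, p, p* be real numbers with 1 < q < k < p < p*, let S, Pr > 0, let δ ≥ 1, and let θ > 0. Define λ_δ := δ^(q·(p−k)/(p−q) + k) · (k·(p−q)) / ((p−k)^((p−k)/(p−q)) · (k−q)^((k−q)/(p−q))) · q^(−(p−k)/(p−q)) · p^((q−k)/(p−q)), λ*(θ) := θ^(−(p−k)/(p*−p)) · ((p*−p)·k)/((p*−k)·p) · (((p−k)·p*)/((p*−k)·p))^((p−k)/(p*−p)) · S^((p*−k)/(p*−p)) / Pr, and θ_δ := δ^(−q·(p*−p)/(p−q) − k·(p*−p)/(p−k)) · ((p−k)·p*)/((p*−k)·p) · (q/p)^((p*−p)/(p−q)) · ( (p*−p)·(k−q)^((k−q)/(p−q)) / ((p*−k)·(p−q)·Pr) )^((p*−p)/(p−k)) · S^((p*−k)/(p−k)) · (p−k)^((p*−p)/(p−q)). If θ < θ_δ, then λ_δ < λ*(θ). -/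
/-- Compatibility of the thresholds: θ < θ_δ implies λ_δ < λ*(θ)
(displays (3.10), (3.5) and (3.11)). -/
theorem stmt_14 (q k p ps : ℝ) (hq : 1 < q) (hqk : q < k) (hkp : k < p) (hpps : p < ps)
    (S Pr δ θ : ℝ) (hS : 0 < S) (hPr : 0 < Pr) (hδ : 1 ≤ δ) (hθ : 0 < θ)
    (lamδ lamstar θδ : ℝ)
    (hlamδ : lamδ = δ ^ (q * (p - k) / (p - q) + k) * (k * (p - q)) /
        ((p - k) ^ ((p - k) / (p - q)) * (k - q) ^ ((k - q) / (p - q))) *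
        q ^ (-(p - k) / (p - q)) * p ^ ((q - k) / (p - q)))
    (hlamstar : lamstar = θ ^ (-(p - k) / (ps - p)) * ((ps - p) * k) / ((ps - k) * p) *
        ((p - k) * ps / ((ps - k) * p)) ^ ((p - k) / (ps - p)) *
        S ^ ((ps - k) / (ps - p)) / Pr)
    (hθδ : θδ = δ ^ (-(q * (ps - p) / (p - q)) - k * (ps - p) / (p - k)) *
        ((p - k) * ps / ((ps - k) * p)) * (q / p) ^ ((ps - p) / (p - q)) *
        ((ps - p) * (k - q) ^ ((k - q) / (p - q)) / ((ps - k) * (p - q) * Pr)) ^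
          ((ps - p) / (p - k)) *
        S ^ ((ps - k) / (p - k)) * (p - k) ^ ((ps - p) / (p - q)))
    (hθsmall : θ < θδ) :
    lamδ < lamstar := by
  have hq0 : (0:ℝ) < q := one_pos.trans hq
  have hk0 : (0:ℝ) < k := hq0.trans hqk
  have hp0 : (0:ℝ) < p := hk0.trans hkp
  have hps0 : (0:ℝ) < ps := hp0.trans hpps
  have hpk : (0:ℝ) < p - k := sub_pos.2 hkp
  have hkq : (0:ℝ) < k - q := sub_pos.2 hqk
  have hpq : (0:ℝ) < p - q := sub_pos.2 (hqk.trans hkp)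
  have hpsp : (0:ℝ) < ps - p := sub_pos.2 hpps
  have hpsk : (0:ℝ) < ps - k := sub_pos.2 (hkp.trans hpps)
  have hδ0 : (0:ℝ) < δ := one_pos.trans_le hδ
  have hθδpos : 0 < θδ := by rw [hθδ]; positivity
  have key : lamδ = θδ ^ (-(p - k) / (ps - p)) * ((ps - p) * k) / ((ps - k) * p) *
      ((p - k) * ps / ((ps - k) * p)) ^ ((p - k) / (ps - p)) *
      S ^ ((ps - k) / (ps - p)) / Pr := by
    have h1 : 0 < lamδ := by rw [hlamδ]; positivity
    have h2 : 0 < θδ ^ (-(p - k) / (ps - p)) * ((ps - p) * k) / ((ps - k) * p) *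
        ((p - k) * ps / ((ps - k) * p)) ^ ((p - k) / (ps - p)) *
        S ^ ((ps - k) / (ps - p)) / Pr := by positivity
    rw [← Real.exp_log h1, ← Real.exp_log h2]
    congr 1
    rw [hlamδ]
    have hlogθδ : Real.log θδ =
        (-(q * (ps - p) / (p - q)) - k * (ps - p) / (p - k)) * Real.log δ +
        (Real.log ((p - k) * ps) - Real.log ((ps - k) * p)) +
        (ps - p) / (p - q) * (Real.log q - Real.log p) +
        (ps - p) / (p - k) * (Real.log (ps - p) + (k - q) / (p - q) * Real.log (k - q)
          - Real.log ((ps - k) * (p - q) * Pr)) +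
        (ps - k) / (p - k) * Real.log S + (ps - p) / (p - q) * Real.log (p - k) := by
      rw [hθδ]
      simp (disch := positivity) only [Real.log_mul, Real.log_div, Real.log_rpow]
    simp (disch := positivity) only [Real.log_mul, Real.log_div, Real.log_rpow]
    rw [hlogθδ]
    simp (disch := positivity) only [Real.log_mul, Real.log_div]
    field_simp
    ring
  rw [key, hlamstar]
  have hexp : -(p - k) / (ps - p) < 0 := by
    rw [neg_div]; exact neg_neg_of_pos (div_pos hpk hpsp)
  gcongr ?_ * _ / _ * _ * _ / _
  · exact Real.rpow_lt_rpow_of_neg hθ hθsmall hexp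
end

section
/- Let p, q be real numbers with 1 ≤ q < p, let C > 0, and let a, b be nonnegative reals with a ≥ C. Then (1/(2p))·a^p + (1/q)·b^q ≥ (min(C^(p−q), 1)/(2^q · p)) · (a + b)^q. -/
/-- Case 2 estimate in the proof of Lemma 4.1. -/
theorem stmt_15 (p q : ℝ) (hq : 1 ≤ q) (hqp : q < p) (C : ℝ) (hC : 0 < C)
    (a b : ℝ) (ha : 0 ≤ a) (hb : 0 ≤ b) (haC : C ≤ a) :
    min (C ^ (p - q)) 1 / (2 ^ q * p) * (a + b) ^ q
      ≤ 1 / (2 * p) * a ^ p + 1 / q * b ^ q := by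
  set m := min (C ^ (p - q)) 1 with hm
  have hp0 : (0:ℝ) < p := lt_trans (lt_of_lt_of_le one_pos hq) hqp
  have hq0 : (0:ℝ) < q := lt_of_lt_of_le one_pos hq
  have hpq0 : 0 ≤ p - q := by linarith
  have ha0 : 0 < a := lt_of_lt_of_le hC haC
  have hm0 : 0 < m := lt_min (Real.rpow_pos_of_pos hC _) one_pos
  have hm1 : m ≤ 1 := min_le_right _ _
  -- Step 1 : m * a^q ≤ a^p
  have key : m * a ^ q ≤ a ^ p := by
    have hsplit : a ^ p = a ^ (p - q) * a ^ q := by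
      rw [← Real.rpow_add ha0]; ring_nf
    rw [hsplit]
    have : m ≤ a ^ (p - q) := by
      rcases le_total 1 a with h1 | h1
      · exact le_trans hm1 (Real.one_le_rpow h1 hpq0)
      · exact le_trans (min_le_left _ _) (Real.rpow_le_rpow hC.le haC hpq0)
    exact mul_le_mul_of_nonneg_right this (Real.rpow_nonneg ha _)
  -- Step 2 : (a+b)^q ≤ 2^(q-1) * (a^q + b^q)
  have pm : (a + b) ^ q ≤ 2 ^ (q - 1) * (a ^ q + b ^ q) := by
    have := NNReal.rpow_add_le_mul_rpow_add_rpow ⟨a, ha⟩ ⟨b, hb⟩ hq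
    have h2 := NNReal.coe_le_coe.mpr this
    push_cast [NNReal.coe_rpow] at h2
    exact h2
  -- combine
  have h2q : (0:ℝ) < 2 ^ q := Real.rpow_pos_of_pos two_pos _
  have h2q' : (2:ℝ) ^ (q - 1) = 2 ^ q / 2 := by
    rw [Real.rpow_sub two_pos, Real.rpow_one]
  have step : m / (2 ^ q * p) * (a + b) ^ q ≤ m / (2 * p) * (a ^ q + b ^ q) := by
    have hnn : 0 ≤ m / (2 ^ q * p) := by positivity
    calc m / (2 ^ q * p) * (a + b) ^ q
        ≤ m / (2 ^ q * p) * (2 ^ (q - 1) * (a ^ q + b ^ q)) :=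
          mul_le_mul_of_nonneg_left pm hnn
      _ = m / (2 * p) * (a ^ q + b ^ q) := by
          rw [h2q']; field_simp
  refine step.trans ?_
  rw [mul_add]
  gcongr ?_ + ?_
  · calc m / (2 * p) * a ^ q = 1 / (2 * p) * (m * a ^ q) := by ring
      _ ≤ 1 / (2 * p) * a ^ p := by
          exact mul_le_mul_of_nonneg_left key (by positivity)
  · have h1 : m / (2 * p) ≤ 1 / q := by
      rw [div_le_div_iff₀ (by positivity) hq0]
      nlinarith
    exact mul_le_mul_of_nonneg_right h1 (Real.rpow_nonneg hb _)
end

section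
/- Let (Ω, μ) be a measure space, let p* be a real number with 1 < p* < ∞, and let (u_n) and u be real-valued measurable functions on Ω such that u_n → u almost everywhere, sup_n ‖u_n‖_{L^{p*}(μ)} < ∞, and u ∈ L^{p*}(μ). Then for every v ∈ L^{p*}(μ), ∫_Ω |u_n|^(p*−2)·u_n·v dμ → ∫_Ω |u|^(p*−2)·u·v dμ as n → ∞. -/
/-!
With `F t = |t| ^ (p - 2) * t` one has `|F t| = |t| ^ (p - 1)`, so `F ∘ u_n` is bounded in
`L^{p'}`, `p' = p / (p - 1)`. By Hölder, `‖1_s · F(u_n) v‖₁ ≤ sup_n ‖F(u_n)‖_{p'} · ‖1_s v‖_p`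
for every set `s`, so the products `F(u_n) v` inherit uniform integrability and tightness from
the single function `v ∈ L^p`. They converge a.e. to `F(u) v`, and Vitali's convergence theorem
upgrades this to convergence in `L¹`, hence of the integrals.
-/

open MeasureTheory Filter
open scoped ENNReal NNReal Topology

theorem ENNReal.exists_pos_mul_le_coe {M : ℝ≥0∞} (hM : M ≠ ∞) {ε : ℝ≥0} (hε : 0 < ε) :
    ∃ η : ℝ≥0, 0 < η ∧ M * η ≤ ε := by
  lift M to ℝ≥0 using hM
  obtain ⟨η, hη, hMη⟩ := exists_pos_mul_lt hε M
  exact ⟨η, hη, by exact_mod_cast hMη.le⟩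

namespace Real

theorem abs_abs_rpow_sub_two_mul_self {p : ℝ} (hp : p ≠ 1) (t : ℝ) :
    |(|t| ^ (p - 2) * t)| = |t| ^ (p - 1) := by
  rcases eq_or_ne t 0 with rfl | ht
  · simp [Real.zero_rpow (sub_ne_zero.mpr hp)]
  · rw [abs_mul, abs_of_nonneg (by positivity), ← Real.rpow_add_one (abs_ne_zero.mpr ht)]
    ring_nf

theorem continuous_abs_rpow_sub_two_mul_self {p : ℝ} (hp : 1 < p) :
    Continuous fun t : ℝ => |t| ^ (p - 2) * t := by
  refine continuous_iff_continuousAt.mpr fun t => ?_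
  rcases eq_or_ne t 0 with rfl | ht
  · have h : Tendsto (fun s : ℝ => |s| ^ (p - 1)) (𝓝 0) (𝓝 0) := by
      have h0 : ContinuousAt (fun s : ℝ => |s| ^ (p - 1)) 0 :=
        continuous_abs.continuousAt.rpow_const (Or.inr (by linarith))
      simpa [ContinuousAt, Real.zero_rpow (by linarith : p - 1 ≠ 0)] using h0
    simpa [ContinuousAt] using squeeze_zero_norm
      (fun s => (abs_abs_rpow_sub_two_mul_self hp.ne' s).le) h
  · exact ((continuous_abs.continuousAt).rpow_const (Or.inl (abs_ne_zero.mpr ht))).mul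
      continuousAt_id

end Real

namespace MeasureTheory

variable {α ι : Type*} {m : MeasurableSpace α} {μ : Measure α}

theorem eLpNorm_abs_rpow_sub_two_mul_self {p : ℝ} (hp : 1 < p) (w : α → ℝ) :
    eLpNorm (fun x => |w x| ^ (p - 2) * w x) (ENNReal.ofReal p.conjExponent) μ =
      eLpNorm w (ENNReal.ofReal p) μ ^ (p - 1) := by
  have hp1 : 0 < p - 1 := sub_pos.mpr hp
  have hexp : ENNReal.ofReal p.conjExponent * ENNReal.ofReal (p - 1) = ENNReal.ofReal p := by
    rw [← ENNReal.ofReal_mul (by unfold Real.conjExponent; positivity), Real.conjExponent,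
      div_mul_cancel₀ _ hp1.ne']
  rw [← hexp, ← eLpNorm_norm_rpow w hp1, ← eLpNorm_norm]
  simp only [Real.norm_eq_abs, Real.abs_abs_rpow_sub_two_mul_self hp.ne']

theorem memLp_of_tendsto_ae {E : Type*} [NormedAddCommGroup E] {p M : ℝ≥0∞} {f : ℕ → α → E}
    {g : α → E} (hf : ∀ n, AEStronglyMeasurable (f n) μ) (hM : M ≠ ∞)
    (hfM : ∀ n, eLpNorm (f n) p μ ≤ M)
    (hfg : ∀ᵐ x ∂μ, Tendsto (fun n => f n x) atTop (𝓝 (g x))) : MemLp g p μ :=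
  ⟨aestronglyMeasurable_of_tendsto_ae atTop hf hfg,
    ((Lp.eLpNorm_lim_le_liminf_eLpNorm hf g hfg).trans
      (liminf_le_of_frequently_le' (Frequently.of_forall hfM))).trans_lt hM.lt_top⟩

section HolderConjugate

variable {p q : ℝ≥0∞} [p.HolderConjugate q] {f : ι → α → ℝ} {v : α → ℝ} {M : ℝ≥0∞}

theorem eLpNorm_indicator_mul_le {g : α → ℝ} (hg : AEStronglyMeasurable g μ)
    (hv : AEStronglyMeasurable v μ) {s : Set α} (hs : MeasurableSet s) :
    eLpNorm (s.indicator fun x => g x * v x) 1 μ ≤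
      eLpNorm g p μ * eLpNorm (s.indicator v) q μ := by
  rw [show (s.indicator fun x => g x * v x) = fun x => g x * s.indicator v x from
    funext fun _ => Set.indicator_mul_right s g v]
  exact (eLpNorm_smul_le_mul_eLpNorm (μ := μ) (p := p) (q := q) (r := 1) (hv.indicator hs) hg :)

theorem unifIntegrable_mul_of_eLpNorm_le (hq : q ≠ ∞) (hf : ∀ i, AEStronglyMeasurable (f i) μ)
    (hM : M ≠ ∞) (hfM : ∀ i, eLpNorm (f i) p μ ≤ M) (hv : MemLp v q μ) :
    UnifIntegrable (fun i x => f i x * v x) 1 μ := by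
  intro ε hε
  obtain ⟨η, hη, hMη⟩ := ENNReal.exists_pos_mul_le_coe hM (Real.toNNReal_pos.mpr hε)
  obtain ⟨δ, hδ, hvδ⟩ := unifIntegrable_const (ι := Unit) (ENNReal.HolderConjugate.one_le q p)
    hq hv (NNReal.coe_pos.mpr hη)
  refine ⟨δ, hδ, fun i s hs hμs => ?_⟩
  calc eLpNorm (s.indicator fun x => f i x * v x) 1 μ
      ≤ eLpNorm (f i) p μ * eLpNorm (s.indicator v) q μ :=
        eLpNorm_indicator_mul_le (hf i) hv.1 hs
    _ ≤ M * η := mul_le_mul' (hfM i) (by simpa using hvδ () s hs hμs)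
    _ ≤ ENNReal.ofReal ε := by simpa [ENNReal.ofReal] using hMη

theorem unifTight_mul_of_eLpNorm_le (hq : q ≠ ∞) (hf : ∀ i, AEStronglyMeasurable (f i) μ)
    (hM : M ≠ ∞) (hfM : ∀ i, eLpNorm (f i) p μ ≤ M) (hv : MemLp v q μ) :
    UnifTight (fun i x => f i x * v x) 1 μ := by
  intro ε hε
  obtain ⟨η, hη, hMη⟩ := ENNReal.exists_pos_mul_le_coe hM hε
  obtain ⟨s, hs, hμs, hvs⟩ :=
    hv.exists_eLpNorm_indicator_compl_lt hq (ENNReal.coe_ne_zero.mpr hη.ne')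
  refine ⟨s, hμs.ne, fun i => ?_⟩
  calc eLpNorm (sᶜ.indicator fun x => f i x * v x) 1 μ
      ≤ eLpNorm (f i) p μ * eLpNorm (sᶜ.indicator v) q μ :=
        eLpNorm_indicator_mul_le (hf i) hv.1 hs.compl
    _ ≤ M * η := mul_le_mul' (hfM i) hvs.le
    _ ≤ ε := hMη

theorem tendsto_integral_mul_of_tendsto_ae (hq : q ≠ ∞) {f : ℕ → α → ℝ} {g : α → ℝ}
    (hf : ∀ n, AEStronglyMeasurable (f n) μ) (hM : M ≠ ∞) (hfM : ∀ n, eLpNorm (f n) p μ ≤ M)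
    (hfg : ∀ᵐ x ∂μ, Tendsto (fun n => f n x) atTop (𝓝 (g x))) (hv : MemLp v q μ) :
    Tendsto (fun n => ∫ x, f n x * v x ∂μ) atTop (𝓝 (∫ x, g x * v x ∂μ)) := by
  have hgv : MemLp (fun x => g x * v x) 1 μ := hv.mul' (memLp_of_tendsto_ae hf hM hfM hfg)
  have hfv : ∀ n, MemLp (fun x => f n x * v x) 1 μ := fun n =>
    hv.mul' ⟨hf n, (hfM n).trans_lt hM.lt_top⟩
  have hL1 : Tendsto (fun n => eLpNorm ((fun x => f n x * v x) - fun x => g x * v x) 1 μ)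
      atTop (𝓝 0) :=
    tendsto_Lp_of_tendsto_ae le_rfl ENNReal.one_ne_top (fun n => (hfv n).1) hgv
      (unifIntegrable_mul_of_eLpNorm_le hq hf hM hfM hv)
      (unifTight_mul_of_eLpNorm_le hq hf hM hfM hv)
      (by filter_upwards [hfg] with x hx using hx.mul_const (v x))
  exact tendsto_integral_of_L1' _ hgv.1
    (Eventually.of_forall fun n => memLp_one_iff_integrable.mp (hfv n)) hL1

end HolderConjugate

end MeasureTheory

theorem stmt_16_general {Ω : Type*} [MeasurableSpace Ω] (μ : Measure Ω)
    (ps : ℝ) (hps : 1 < ps)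
    (u : ℕ → Ω → ℝ) (ulim : Ω → ℝ)
    (hu_meas : ∀ n, Measurable (u n))
    (hae : ∀ᵐ x ∂μ, Tendsto (fun n => u n x) atTop (nhds (ulim x)))
    (hbdd : ⨆ n, eLpNorm (u n) (ENNReal.ofReal ps) μ < ⊤) :
    ∀ v : Ω → ℝ, MemLp v (ENNReal.ofReal ps) μ →
      Tendsto (fun n => ∫ x, |u n x| ^ (ps - 2) * u n x * v x ∂μ) atTop
        (nhds (∫ x, |ulim x| ^ (ps - 2) * ulim x * v x ∂μ)) := by
  intro v hv
  have : ENNReal.HolderConjugate (ENNReal.ofReal ps.conjExponent) (ENNReal.ofReal ps) :=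
    (Real.HolderConjugate.conjExponent hps).symm.ennrealOfReal
  have hps1 : 0 ≤ ps - 1 := sub_nonneg.mpr hps.le
  have hF := Real.continuous_abs_rpow_sub_two_mul_self hps
  refine tendsto_integral_mul_of_tendsto_ae (p := ENNReal.ofReal ps.conjExponent)
    (M := (⨆ n, eLpNorm (u n) (ENNReal.ofReal ps) μ) ^ (ps - 1)) ENNReal.ofReal_ne_top
    (fun n => (hF.measurable.comp (hu_meas n)).aestronglyMeasurable)
    (ENNReal.rpow_ne_top_of_nonneg hps1 hbdd.ne) (fun n => ?_)
    (by filter_upwards [hae] with x hx using (hF.tendsto _).comp hx) hv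
  rw [eLpNorm_abs_rpow_sub_two_mul_self hps]
  exact ENNReal.rpow_le_rpow (le_iSup (fun n => eLpNorm (u n) (ENNReal.ofReal ps) μ) n) hps1

/-- Weak convergence claim (2.8) in the proof of Lemma 2.1: an a.e. convergent, bounded
sequence in L^{p*} satisfies |u_n|^{p*−2}u_n ⇀ |u|^{p*−2}u against every v ∈ L^{p*}. -/
theorem stmt_16 {Ω : Type*} [MeasurableSpace Ω] (μ : Measure Ω)
    (ps : ℝ) (hps : 1 < ps)
    (u : ℕ → Ω → ℝ) (ulim : Ω → ℝ)
    (hu_meas : ∀ n, Measurable (u n)) (hulim_meas : Measurable ulim)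
    (hae : ∀ᵐ x ∂μ, Tendsto (fun n => u n x) atTop (nhds (ulim x)))
    (hbdd : ⨆ n, eLpNorm (u n) (ENNReal.ofReal ps) μ < ⊤)
    (hulim : MemLp ulim (ENNReal.ofReal ps) μ) :
    ∀ v : Ω → ℝ, MemLp v (ENNReal.ofReal ps) μ →
      Tendsto (fun n => ∫ x, |u n x| ^ (ps - 2) * u n x * v x ∂μ) atTop
        (nhds (∫ x, |ulim x| ^ (ps - 2) * ulim x * v x ∂μ)) :=
  stmt_16_general μ ps hps u ulim hu_meas hae hbdd
end
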